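/- Fix an integer i ≥ 2, vectors x_1, …, x_i ∈ ℝ^d with ‖x_j‖₂ ≤ B_x, reals y_1, …, y_{i−1} with |y_j| ≤ B_y, and w ∈ ℝ^d with ‖w‖₂ ≤ B_w, and set R = max(B_x B_w, B_y). Then Σ_{j=1}^{i−1} [σ(⟨w, x_j⟩/2 − y_j + R(3i − 3j − 1)) − σ(R(3i − 3j − 1))]·x_j + Σ_{j=1}^{i} [σ(⟨w, x_j⟩/2 + R(3i − 3j − 1)) − σ(R(3i − 3j − 1))]·x_j = Σ_{j=1}^{i−1} (⟨w, x_j⟩ − y_j)·x_j, where σ(t) = max(t, 0). In particular, the left-hand side equals (i−1)·∇L̂_{i−1}(w), the scaled gradient of the unregularized least-squares risk L̂_{i−1}(w) = (1/(2(i−1))) Σ_{j=1}^{i−1} (⟨w, x_j⟩ − y_j)². -/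

import Mathlib

/-! For `j < i` the offset `R(3i - 3j - 1) ≥ 2R` dominates `|⟨w, x_j⟩/2 - y_j| ≤ 3R/2`, so
both ReLUs of the `j`-th pair act as the identity and their differences add up to
`⟨w, x_j⟩ - y_j`. For `j = i` the offset is `-R ≤ -|⟨w, x_i⟩|`, so both ReLUs vanish.
The bound `|⟨w, x_j⟩| ≤ B_x B_w ≤ R` is Cauchy–Schwarz. -/

open scoped Matrix

noncomputable section

/-- The ReLU activation. -/
def relu (t : ℝ) : ℝ := max t 0

/-- Euclidean (ℓ2) norm of a vector in `ℝ^n`. -/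
def l2norm {n : ℕ} (v : Fin n → ℝ) : ℝ := Real.sqrt (∑ i, (v i) ^ 2)

lemma relu_add_sub_relu_of_nonneg {a c : ℝ} (hc : 0 ≤ c) (h : 0 ≤ a + c) :
    relu (a + c) - relu c = a := by
  rw [relu, relu, max_eq_left h, max_eq_left hc, add_sub_cancel_right]

lemma relu_add_sub_relu_of_nonpos {a c : ℝ} (hc : c ≤ 0) (h : a + c ≤ 0) :
    relu (a + c) - relu c = 0 := by
  rw [relu, relu, max_eq_right h, max_eq_right hc, sub_zero]

lemma l2norm_eq_norm {n : ℕ} (v : Fin n → ℝ) :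
    l2norm v = ‖(WithLp.toLp 2 v : EuclideanSpace ℝ (Fin n))‖ := by
  simp [l2norm, EuclideanSpace.norm_eq]

lemma abs_dotProduct_le_l2norm_mul {n : ℕ} (v u : Fin n → ℝ) :
    |v ⬝ᵥ u| ≤ l2norm v * l2norm u := by
  simpa [l2norm_eq_norm, EuclideanSpace.inner_eq_star_dotProduct, dotProduct_comm] using
    abs_real_inner_le_norm (WithLp.toLp 2 v : EuclideanSpace ℝ (Fin n)) (WithLp.toLp 2 u)

lemma abs_dotProduct_le_of_l2norm_le {n : ℕ} {v u : Fin n → ℝ} {a b : ℝ}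
    (hv : l2norm v ≤ a) (hu : l2norm u ≤ b) : |v ⬝ᵥ u| ≤ a * b :=
  (abs_dotProduct_le_l2norm_mul v u).trans <|
    mul_le_mul hv hu (Real.sqrt_nonneg _) ((Real.sqrt_nonneg _).trans hv)

lemma relu_pair_sub_eq_of_abs_le {a b c R : ℝ} (ha : |a| ≤ R) (hb : |b| ≤ R)
    (hc : 2 * R ≤ c) :
    (relu (a / 2 - b + c) - relu c) + (relu (a / 2 + c) - relu c) = a - b := by
  obtain ⟨ha₁, ha₂⟩ := abs_le.mp ha
  obtain ⟨hb₁, hb₂⟩ := abs_le.mp hb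
  rw [relu_add_sub_relu_of_nonneg (by linarith) (by linarith),
    relu_add_sub_relu_of_nonneg (by linarith) (by linarith)]
  ring

lemma relu_half_add_neg_sub_relu_neg {a R : ℝ} (ha : |a| ≤ R) :
    relu (a / 2 + -R) - relu (-R) = 0 := by
  obtain ⟨ha₁, ha₂⟩ := abs_le.mp ha
  exact relu_add_sub_relu_of_nonpos (by linarith) (by linarith)

lemma two_mul_le_mul_offset {R : ℝ} (hR : 0 ≤ R) {j n : ℕ} (hj : j ≤ n) :
    2 * R ≤ R * (3 * ((n + 1 : ℕ) : ℝ) - 3 * j - 1) := by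
  have hjn : (j : ℝ) ≤ n := by exact_mod_cast hj
  push_cast
  nlinarith

theorem incontext_gd_relu_identity_general (d : ℕ) (i : ℕ)
    (Bx By Bw : ℝ) (x : ℕ → Fin d → ℝ) (y : ℕ → ℝ) (w : Fin d → ℝ)
    (hx : ∀ j ∈ Finset.Icc 1 i, l2norm (x j) ≤ Bx)
    (hy : ∀ j ∈ Finset.Icc 1 (i-1), |y j| ≤ By)
    (hw : l2norm w ≤ Bw)
    (R : ℝ) (hR : R = max (Bx * Bw) By) :
    (∑ j ∈ Finset.Icc 1 (i-1),
        (relu (w ⬝ᵥ x j / 2 - y j + R * (3*(i:ℝ) - 3*(j:ℝ) - 1))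
          - relu (R * (3*(i:ℝ) - 3*(j:ℝ) - 1))) • x j)
      + (∑ j ∈ Finset.Icc 1 i,
        (relu (w ⬝ᵥ x j / 2 + R * (3*(i:ℝ) - 3*(j:ℝ) - 1))
          - relu (R * (3*(i:ℝ) - 3*(j:ℝ) - 1))) • x j)
      = ∑ j ∈ Finset.Icc 1 (i-1), (w ⬝ᵥ x j - y j) • x j := by
  have hdot : ∀ j ∈ Finset.Icc 1 i, |w ⬝ᵥ x j| ≤ R := fun j hj =>
    hR ▸ (abs_dotProduct_le_of_l2norm_le hw (hx j hj)).trans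
      ((mul_comm Bw Bx).le.trans (le_max_left _ _))
  have hyR : ∀ j ∈ Finset.Icc 1 (i-1), |y j| ≤ R := fun j hj =>
    hR ▸ (hy j hj).trans (le_max_right _ _)
  obtain _ | n := i
  · simp
  rw [Nat.add_sub_cancel] at hyR ⊢
  have hlast := hdot (n + 1) (by simp)
  have hoffset_last : R * (3 * ((n + 1 : ℕ) : ℝ) - 3 * ((n + 1 : ℕ) : ℝ) - 1) = -R := by
    ring
  rw [Finset.sum_Icc_succ_top (by omega), hoffset_last, relu_half_add_neg_sub_relu_neg hlast,
    zero_smul, add_zero, ← Finset.sum_add_distrib]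
  refine Finset.sum_congr rfl fun j hj => ?_
  rw [← add_smul, relu_pair_sub_eq_of_abs_le
    (hdot j (Finset.Icc_subset_Icc_right n.le_succ hj)) (hyR j hj)
    (two_mul_le_mul_offset ((abs_nonneg _).trans hlast) (Finset.mem_Icc.mp hj).2)]

/-- **The in-context gradient-descent identity (key step of
Proposition `one-step-gd`).**
Fix `i ≥ 2`, vectors `x_1, …, x_i` with `‖x_j‖₂ ≤ B_x`, reals
`y_1, …, y_{i-1}` with `|y_j| ≤ B_y`, `w` with `‖w‖₂ ≤ B_w`, and set
`R = max(B_x B_w, B_y)`.  Then the differences of ReLU attention scores with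
offsets `R(3i - 3j - 1)` exactly reproduce the scaled least-squares gradient
`Σ_{j=1}^{i-1} (⟨w, x_j⟩ - y_j) x_j = (i-1)∇L̂_{i-1}(w)`. -/
theorem incontext_gd_relu_identity (d : ℕ) (i : ℕ) (hi : 2 ≤ i)
    (Bx By Bw : ℝ) (x : ℕ → Fin d → ℝ) (y : ℕ → ℝ) (w : Fin d → ℝ)
    (hx : ∀ j ∈ Finset.Icc 1 i, l2norm (x j) ≤ Bx)
    (hy : ∀ j ∈ Finset.Icc 1 (i-1), |y j| ≤ By)
    (hw : l2norm w ≤ Bw)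
    (R : ℝ) (hR : R = max (Bx * Bw) By) :
    (∑ j ∈ Finset.Icc 1 (i-1),
        (relu (w ⬝ᵥ x j / 2 - y j + R * (3*(i:ℝ) - 3*(j:ℝ) - 1))
          - relu (R * (3*(i:ℝ) - 3*(j:ℝ) - 1))) • x j)
      + (∑ j ∈ Finset.Icc 1 i,
        (relu (w ⬝ᵥ x j / 2 + R * (3*(i:ℝ) - 3*(j:ℝ) - 1))
          - relu (R * (3*(i:ℝ) - 3*(j:ℝ) - 1))) • x j)
      = ∑ j ∈ Finset.Icc 1 (i-1), (w ⬝ᵥ x j - y j) • x j :=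
  incontext_gd_relu_identity_general d i Bx By Bw x y w hx hy hw R hR
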